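/- arXiv:2307.04271 — 2 statements merged into one kernel-verified Lean document; each statement's English description precedes it below -/
import Mathlib

section
/- The function h(x) = exp((1+x)^{1/4}/ε) is convex on [0, ∞) whenever 0 < ε ≤ 1/3. -/
open Real Set Filter

theorem stmt4 (ε : ℝ) (hε : 0 < ε) (hε' : ε ≤ 1 / 3) :
    ConvexOn ℝ (Set.Ici (0 : ℝ)) (fun x => Real.exp ((1 + x) ^ ((1 : ℝ) / 4) / ε)) := by
  set f : ℝ → ℝ := fun x => Real.exp ((1 + x) ^ ((1 : ℝ) / 4) / ε) with hfdef
  set A : ℝ → ℝ := fun x => (1/4) * (1 + x) ^ ((1:ℝ)/4 - 1) / ε with hAdef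
  set F : ℝ → ℝ := fun x => f x * A x with hFdef
  -- derivative of inner function
  have hg : ∀ x : ℝ, -1 < x →
      HasDerivAt (fun x : ℝ => (1 + x) ^ ((1:ℝ)/4) / ε) (A x) x := by
    intro x hx
    have h1 : HasDerivAt (fun x : ℝ => 1 + x) 1 x := (hasDerivAt_id x).const_add 1
    have h2 := (Real.hasDerivAt_rpow_const (x := 1 + x) (p := (1:ℝ)/4)
      (Or.inl (by linarith))).comp x h1
    simpa [hAdef, mul_comm] using h2.div_const ε
  have hf : ∀ x : ℝ, -1 < x → HasDerivAt f (F x) x := by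
    intro x hx
    exact (Real.hasDerivAt_exp _).comp x (hg x hx)
  have hA : ∀ x : ℝ, -1 < x →
      HasDerivAt A ((1/4) * (((1:ℝ)/4 - 1) * (1 + x) ^ ((1:ℝ)/4 - 2)) / ε) x := by
    intro x hx
    have h1 : HasDerivAt (fun x : ℝ => 1 + x) 1 x := (hasDerivAt_id x).const_add 1
    have h2 := (Real.hasDerivAt_rpow_const (x := 1 + x) (p := (1:ℝ)/4 - 1)
      (Or.inl (by linarith))).comp x h1
    have := (h2.const_mul (1/4 : ℝ)).div_const ε
    rw [show (1:ℝ)/4 - 2 = (1:ℝ)/4 - 1 - 1 by norm_num]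
    simpa [hAdef, mul_assoc] using this
  have hF : ∀ x : ℝ, -1 < x →
      HasDerivAt F (F x * A x + f x * ((1/4) * (((1:ℝ)/4 - 1) * (1 + x) ^ ((1:ℝ)/4 - 2)) / ε)) x := by
    intro x hx
    exact (hf x hx).mul (hA x hx)
  have hEq : ∀ x : ℝ, -1 < x → deriv f =ᶠ[nhds x] F := by
    intro x hx
    filter_upwards [Ioi_mem_nhds hx] with y hy
    exact (hf y hy).deriv
  apply convexOn_of_deriv2_nonneg (convex_Ici 0)
  · intro x hx
    exact ((hf x (by simp at hx; linarith)).differentiableAt.continuousAt).continuousWithinAt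
  · intro x hx
    rw [interior_Ici] at hx
    exact (hf x (by simp at hx; linarith)).differentiableAt.differentiableWithinAt
  · intro x hx
    rw [interior_Ici] at hx
    have hx' : (-1:ℝ) < x := by simp at hx; linarith
    exact (((hF x hx').differentiableAt).congr_of_eventuallyEq (hEq x hx')).differentiableWithinAt
  · intro x hx
    rw [interior_Ici] at hx
    have hx' : (-1:ℝ) < x := by simp at hx; linarith
    have hd2 : deriv^[2] f x = F x * A x + f x * ((1/4) * (((1:ℝ)/4 - 1) * (1 + x) ^ ((1:ℝ)/4 - 2)) / ε) := by
      have : deriv (deriv f) x = deriv F x := (hEq x hx').deriv_eq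
      simp only [Function.iterate_succ, Function.iterate_zero, Function.comp_apply, Function.id_def]
      rw [this, (hF x hx').deriv]
    rw [hd2]
    -- now the inequality
    have ht : (1:ℝ) ≤ 1 + x := by simp at hx; linarith
    have ht0 : (0:ℝ) < 1 + x := by linarith
    have h14 : (1:ℝ) ≤ (1 + x) ^ ((1:ℝ)/4) := Real.one_le_rpow ht (by norm_num)
    have hsplit : (1 + x) ^ ((1:ℝ)/4 - 1) * (1 + x) ^ ((1:ℝ)/4 - 1)
        = (1 + x) ^ ((1:ℝ)/4) * (1 + x) ^ ((1:ℝ)/4 - 2) := by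
      rw [← Real.rpow_add ht0, ← Real.rpow_add ht0]; ring_nf
    have hpos2 : (0:ℝ) < (1 + x) ^ ((1:ℝ)/4 - 2) := Real.rpow_pos_of_pos ht0 _
    have hfpos : (0:ℝ) < f x := Real.exp_pos _
    have key : (0:ℝ) ≤ A x * A x + (1/4) * (((1:ℝ)/4 - 1) * (1 + x) ^ ((1:ℝ)/4 - 2)) / ε := by
      have hA2 : A x * A x = (1/16) * ((1 + x) ^ ((1:ℝ)/4) * (1 + x) ^ ((1:ℝ)/4 - 2)) / (ε * ε) := by
        have h0 : A x * A x = (1/16) * ((1 + x) ^ ((1:ℝ)/4 - 1) * (1 + x) ^ ((1:ℝ)/4 - 1)) / (ε * ε) := by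
          simp only [hAdef]; ring
        rw [h0, hsplit]
      rw [hA2]
      have h3e : 3 * ε ≤ (1 + x) ^ ((1:ℝ)/4) := by linarith
      have := mul_pos hε hε
      rw [div_add_div _ _ (by positivity) (ne_of_gt hε), le_div_iff₀ (by positivity)]
      ring_nf
      nlinarith [mul_pos hpos2 hε, mul_le_mul_of_nonneg_left h3e (le_of_lt hpos2)]
    calc (0:ℝ) ≤ f x * (A x * A x + (1/4) * (((1:ℝ)/4 - 1) * (1 + x) ^ ((1:ℝ)/4 - 2)) / ε) :=
          mul_nonneg hfpos.le key
      _ = F x * A x + f x * ((1/4) * (((1:ℝ)/4 - 1) * (1 + x) ^ ((1:ℝ)/4 - 2)) / ε) := by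
          rw [hFdef]; ring
end

section
/- Let H, E be Hilbert spaces and G : H → E a compact linear operator. Define Γ : L²(0,T;H) → C([0,T];E) by (Γφ)(t) = ∫₀^t G φ(s) ds. If φ_n ⇀ φ weakly in L²(0,T;H) with sup_n ‖φ_n‖_{L²} < ∞, then Γφ_n → Γφ strongly in C([0,T];E). -/
/-!
For fixed `t`, testing the weak convergence against `𝟙_(0,t] z` shows that `∫₀ᵗ φₙ ⇀ ∫₀ᵗ φ`
weakly in `H`; these integrals are bounded by Cauchy–Schwarz, so the compact operator `G` turns
this into norm convergence of `Γφₙ(t) = G (∫₀ᵗ φₙ)`. Cauchy–Schwarz also gives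
`‖Γφₙ(t) - Γφₙ(s)‖ ≤ ‖G‖ √M √|t - s|`, so the `Γφₙ` are equicontinuous on the compact interval
`[0, T]`, where pointwise convergence of an equicontinuous family is uniform.
-/

open MeasureTheory Filter Topology Set
open scoped Interval

section CauchySchwarz

variable {α F : Type*} [MeasurableSpace α] {μ : Measure α} [NormedAddCommGroup F]

theorem integral_norm_le_sqrt_measureReal_mul_sqrt [IsFiniteMeasure μ] {g : α → F}
    (hg : MemLp g 2 μ) :
    ∫ x, ‖g x‖ ∂μ ≤ √(μ.real univ) * √(∫ x, ‖g x‖ ^ 2 ∂μ) := by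
  have holder := integral_mul_le_Lp_mul_Lq_of_nonneg Real.HolderConjugate.two_two
    (Eventually.of_forall fun x => norm_nonneg (g x)) (Eventually.of_forall fun _ => zero_le_one)
    (by simpa using hg.norm) (by simpa using memLp_const (μ := μ) (p := 2) (1 : ℝ))
  simp only [mul_one, Real.rpow_two, one_pow, integral_const, smul_eq_mul] at holder
  rw [Real.sqrt_eq_rpow, Real.sqrt_eq_rpow, mul_comm]
  simpa using holder

theorem norm_setIntegral_le_sqrt_measureReal_mul_sqrt [NormedSpace ℝ F] {g : α → F}
    {s S : Set α} (hsS : s ⊆ S) (hs : μ s ≠ ⊤) (hg : MemLp g 2 (μ.restrict S)) :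
    ‖∫ x in s, g x ∂μ‖ ≤ √(μ.real s) * √(∫ x in S, ‖g x‖ ^ 2 ∂μ) := by
  have : IsFiniteMeasure (μ.restrict s) := isFiniteMeasure_restrict.2 hs
  have hg_s : MemLp g 2 (μ.restrict s) := hg.mono_measure (Measure.restrict_mono hsS le_rfl)
  calc ‖∫ x in s, g x ∂μ‖ ≤ ∫ x in s, ‖g x‖ ∂μ := norm_integral_le_integral_norm _
    _ ≤ √(μ.real s) * √(∫ x in s, ‖g x‖ ^ 2 ∂μ) := by
      simpa [measureReal_restrict_apply_univ] using
        integral_norm_le_sqrt_measureReal_mul_sqrt hg_s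
    _ ≤ √(μ.real s) * √(∫ x in S, ‖g x‖ ^ 2 ∂μ) := by
      refine mul_le_mul_of_nonneg_left (Real.sqrt_le_sqrt ?_) (Real.sqrt_nonneg _)
      exact setIntegral_mono_set (hg.integrable_norm_pow two_ne_zero)
        (Eventually.of_forall fun _ => by positivity) hsS.eventuallyLE

end CauchySchwarz

theorem integral_norm_clm_comp_sq_le {𝕜 α F F' : Type*} [NontriviallyNormedField 𝕜]
    [MeasurableSpace α] {μ : Measure α} [NormedAddCommGroup F] [NormedSpace 𝕜 F]
    [NormedAddCommGroup F'] [NormedSpace 𝕜 F'] (G : F →L[𝕜] F') {g : α → F} (hg : MemLp g 2 μ) :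
    ∫ x, ‖G (g x)‖ ^ 2 ∂μ ≤ ‖G‖ ^ 2 * ∫ x, ‖g x‖ ^ 2 ∂μ := by
  rw [← integral_const_mul]
  refine integral_mono_of_nonneg (Eventually.of_forall fun _ => by positivity)
    ((hg.integrable_norm_pow two_ne_zero).const_mul _) (Eventually.of_forall fun x => ?_)
  dsimp only
  rw [← mul_pow]
  exact pow_le_pow_left₀ (norm_nonneg _) (G.le_opNorm (g x)) 2

section Primitive

variable {E : Type*} [NormedAddCommGroup E] [NormedSpace ℝ E] {T M : ℝ}

theorem dist_setIntegral_Ioc_le {g : ℝ → E} (hg : MemLp g 2 (volume.restrict (Ioc 0 T)))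
    (hM : ∫ t in Ioc 0 T, ‖g t‖ ^ 2 ≤ M) {s t : ℝ} (hs : s ∈ Icc 0 T) (ht : t ∈ Icc 0 T) :
    dist (∫ x in Ioc 0 s, g x) (∫ x in Ioc 0 t, g x) ≤ √M * √(dist s t) := by
  have hint : ∀ u ∈ Icc 0 T, IntervalIntegrable g volume 0 u := fun u hu =>
    (intervalIntegrable_iff_integrableOn_Ioc_of_le hu.1).2 <|
      IntegrableOn.mono_set (hg.integrable one_le_two) (Ioc_subset_Ioc_right hu.2)
  have hsub : Ι t s ⊆ Ioc 0 T :=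
    Ioc_subset_Ioc (le_min ht.1 hs.1) (max_le ht.2 hs.2)
  rw [← intervalIntegral.integral_of_le hs.1, ← intervalIntegral.integral_of_le ht.1,
    dist_eq_norm, intervalIntegral.integral_interval_sub_left (hint s hs) (hint t ht),
    intervalIntegral.norm_integral_eq_norm_integral_uIoc, mul_comm]
  calc ‖∫ x in Ι t s, g x‖ ≤ √(volume.real (Ι t s)) * √(∫ x in Ioc 0 T, ‖g x‖ ^ 2) :=
        norm_setIntegral_le_sqrt_measureReal_mul_sqrt hsub (by simp [Real.volume_uIoc]) hg
    _ ≤ √(dist s t) * √M := by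
        rw [measureReal_def, Real.volume_uIoc, ENNReal.toReal_ofReal (abs_nonneg _),
          Real.dist_eq]
        gcongr

theorem equicontinuousOn_setIntegral_Ioc {ι : Type*} {g : ι → ℝ → E}
    (hg : ∀ i, MemLp (g i) 2 (volume.restrict (Ioc 0 T)))
    (hM : ∀ i, ∫ t in Ioc 0 T, ‖g i t‖ ^ 2 ≤ M) :
    EquicontinuousOn (fun i t => ∫ x in Ioc 0 t, g i x) (Icc 0 T) := by
  rw [← equicontinuous_restrict_iff]
  refine Metric.equicontinuous_of_continuity_modulus (fun r => √M * √r) ?_ _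
    fun s t i => dist_setIntegral_Ioc_le (hg i) (hM i) s.2 t.2
  exact (by fun_prop : Continuous fun r => √M * √r).tendsto' 0 0 (by simp)

end Primitive

theorem EquicontinuousOn.tendstoUniformlyOn_of_tendsto {ι X α : Type*} [TopologicalSpace X]
    [UniformSpace α] {F : ι → X → α} {f : X → α} {K : Set X} {p : Filter ι}
    (hF : EquicontinuousOn F K) (hK : IsCompact K)
    (hFf : ∀ x ∈ K, Tendsto (fun i => F i x) p (𝓝 (f x))) :
    TendstoUniformlyOn F f p K := by
  have : CompactSpace K := isCompact_iff_compactSpace.mp hK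
  have hK_unif := ((equicontinuous_restrict_iff F).2 hF).tendsto_uniformFun_iff_pi p
    (K.domRestrict f) |>.2 (tendsto_pi_nhds.2 fun x => hFf x x.2)
  rw [tendstoUniformlyOn_iff_tendstoUniformly_comp_coe]
  exact UniformFun.tendsto_iff_tendstoUniformly.1 hK_unif

theorem IsCompactOperator.tendsto_of_tendsto_dual {𝕜 H E ι : Type*} [RCLike 𝕜]
    [NormedAddCommGroup H] [NormedSpace 𝕜 H] [NormedAddCommGroup E] [NormedSpace 𝕜 E]
    {G : H →L[𝕜] E} (hG : IsCompactOperator G) {l : Filter ι} {x : ι → H} {y : H}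
    (hx : Bornology.IsBounded (range x))
    (hxy : ∀ ℓ : StrongDual 𝕜 H, Tendsto (fun i => ℓ (x i)) l (𝓝 (ℓ y))) :
    Tendsto (fun i => G (x i)) l (𝓝 (G y)) := by
  refine (hG.isCompact_closure_image_of_bounded hx).tendsto_nhds_of_unique_mapClusterPt
    (Eventually.of_forall fun i => subset_closure (mem_image_of_mem G (mem_range_self i)))
    fun z _ hz => (SeparatingDual.eq_iff_forall_dual_eq (R := 𝕜)).2 fun ℓ => ?_
  have hℓz : MapClusterPt (ℓ z) l (fun i => ℓ (G (x i))) :=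
    hz.continuousAt_comp ℓ.continuous.continuousAt
  exact eq_of_nhds_neBot (hℓz.clusterPt.mono (hxy (ℓ.comp G)))

theorem tendsto_dual_of_tendsto_inner {𝕜 H ι : Type*} [RCLike 𝕜] [NormedAddCommGroup H]
    [InnerProductSpace 𝕜 H] [CompleteSpace H] {l : Filter ι} {x : ι → H} {y : H}
    (hxy : ∀ z, Tendsto (fun i => inner 𝕜 z (x i)) l (𝓝 (inner 𝕜 z y)))
    (ℓ : StrongDual 𝕜 H) : Tendsto (fun i => ℓ (x i)) l (𝓝 (ℓ y)) := by
  simpa only [InnerProductSpace.toDual_symm_apply] using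
    hxy ((InnerProductSpace.toDual 𝕜 H).symm ℓ)

section Weak

variable {α H ι : Type*} [MeasurableSpace α] {μ : Measure α} [NormedAddCommGroup H]
  [InnerProductSpace ℝ H] [CompleteSpace H]

theorem integral_inner_indicator_const {g : α → H} (hg : Integrable g μ) {s : Set α}
    (hs : MeasurableSet s) (z : H) :
    ∫ x, inner ℝ (g x) (s.indicator (fun _ => z) x) ∂μ = inner ℝ z (∫ x in s, g x ∂μ) := by
  have hind : (fun x => inner ℝ (g x) (s.indicator (fun _ => z) x))
      = s.indicator (fun x => inner ℝ z (g x)) := by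
    funext x
    by_cases hx : x ∈ s <;> simp [hx, real_inner_comm]
  rw [hind, integral_indicator hs, integral_inner hg.integrableOn]

theorem tendsto_inner_setIntegral_of_weak [IsFiniteMeasure μ] {l : Filter ι} {f : ι → α → H}
    {φ : α → H} (hf : ∀ i, MemLp (f i) 2 μ) (hφ : MemLp φ 2 μ)
    (hweak : ∀ ψ : α → H, MemLp ψ 2 μ →
      Tendsto (fun i => ∫ x, inner ℝ (f i x) (ψ x) ∂μ) l (𝓝 (∫ x, inner ℝ (φ x) (ψ x) ∂μ)))
    {s : Set α} (hs : MeasurableSet s) (z : H) :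
    Tendsto (fun i => inner ℝ z (∫ x in s, f i x ∂μ)) l (𝓝 (inner ℝ z (∫ x in s, φ x ∂μ))) := by
  simpa only [integral_inner_indicator_const ((hf _).integrable one_le_two) hs,
    integral_inner_indicator_const (hφ.integrable one_le_two) hs] using
    hweak _ ((memLp_const z).indicator hs)

end Weak

theorem IsCompactOperator.tendsto_setIntegral_Ioc_of_weak {H E : Type*}
    [NormedAddCommGroup H] [InnerProductSpace ℝ H] [CompleteSpace H]
    [NormedAddCommGroup E] [NormedSpace ℝ E] [CompleteSpace E] {T M : ℝ}
    {G : H →L[ℝ] E} (hG : IsCompactOperator G) {f : ℕ → ℝ → H} {φ : ℝ → H}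
    (hf : ∀ n, MemLp (f n) 2 (volume.restrict (Ioc 0 T)))
    (hφ : MemLp φ 2 (volume.restrict (Ioc 0 T)))
    (hbound : ∀ n, ∫ t in Ioc 0 T, ‖f n t‖ ^ 2 ≤ M)
    (hweak : ∀ ψ : ℝ → H, MemLp ψ 2 (volume.restrict (Ioc 0 T)) →
      Tendsto (fun n => ∫ t in Ioc 0 T, inner ℝ (f n t) (ψ t)) atTop
        (𝓝 (∫ t in Ioc 0 T, inner ℝ (φ t) (ψ t))))
    {t : ℝ} (ht : t ∈ Icc 0 T) :
    Tendsto (fun n => ∫ s in Ioc 0 t, G (f n s)) atTop (𝓝 (∫ s in Ioc 0 t, G (φ s))) := by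
  have hsub : Ioc 0 t ⊆ Ioc 0 T := Ioc_subset_Ioc_right ht.2
  have hrestrict :
      (volume.restrict (Ioc 0 T)).restrict (Ioc 0 t) = volume.restrict (Ioc 0 t) := by
    rw [Measure.restrict_restrict measurableSet_Ioc, inter_eq_left.2 hsub]
  have hinner := tendsto_inner_setIntegral_of_weak (s := Ioc 0 t) hf hφ hweak measurableSet_Ioc
  rw [hrestrict] at hinner
  have hbdd : Bornology.IsBounded (range fun n => ∫ s in Ioc 0 t, f n s) := by
    refine isBounded_iff_forall_norm_le.2 ⟨√(volume.real (Ioc (0 : ℝ) t)) * √M, ?_⟩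
    rintro _ ⟨n, rfl⟩
    exact (norm_setIntegral_le_sqrt_measureReal_mul_sqrt hsub measure_Ioc_lt_top.ne (hf n)).trans
      (by gcongr; exact hbound n)
  have hint : ∀ g : ℝ → H, MemLp g 2 (volume.restrict (Ioc 0 T)) →
      IntegrableOn g (Ioc 0 t) volume := fun g hg =>
    IntegrableOn.mono_set (hg.integrable one_le_two) hsub
  simp only [G.integral_comp_comm (hint _ (hf _)), G.integral_comp_comm (hint φ hφ)]
  exact hG.tendsto_of_tendsto_dual hbdd (tendsto_dual_of_tendsto_inner hinner)

theorem stmt9_general {H E : Type*}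
    [NormedAddCommGroup H] [InnerProductSpace ℝ H] [CompleteSpace H]
    [NormedAddCommGroup E] [NormedSpace ℝ E] [CompleteSpace E]
    (T : ℝ)
    (G : H →L[ℝ] E) (hG : IsCompactOperator G)
    (f : ℕ → ℝ → H) (φ : ℝ → H)
    (hf : ∀ n, MemLp (f n) 2 (volume.restrict (Set.Ioc 0 T)))
    (hφ : MemLp φ 2 (volume.restrict (Set.Ioc 0 T)))
    (M : ℝ)
    (hbound : ∀ n, (∫ t in Set.Ioc 0 T, ‖f n t‖ ^ 2) ≤ M)
    (hweak : ∀ ψ : ℝ → H, MemLp ψ 2 (volume.restrict (Set.Ioc 0 T)) →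
      Filter.Tendsto (fun n => ∫ t in Set.Ioc 0 T, (inner ℝ (f n t) (ψ t) : ℝ))
        Filter.atTop (nhds (∫ t in Set.Ioc 0 T, (inner ℝ (φ t) (ψ t) : ℝ)))) :
    TendstoUniformlyOn
      (fun n t => ∫ s in Set.Ioc (0 : ℝ) t, G (f n s))
      (fun t => ∫ s in Set.Ioc (0 : ℝ) t, G (φ s))
      Filter.atTop (Set.Icc 0 T) := by
  have hGf : ∀ n, ∫ t in Ioc 0 T, ‖G (f n t)‖ ^ 2 ≤ ‖G‖ ^ 2 * M := fun n =>
    (integral_norm_clm_comp_sq_le G (hf n)).trans (by gcongr; exact hbound n)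
  exact (equicontinuousOn_setIntegral_Ioc (fun n => G.comp_memLp' (hf n)) hGf)
    |>.tendstoUniformlyOn_of_tendsto isCompact_Icc
      fun t ht => hG.tendsto_setIntegral_Ioc_of_weak hf hφ hbound hweak ht

/-- Compactness of the integrated control operator `Γφ(t) = ∫₀ᵗ Gφ(s) ds`:
if `G` is a compact operator and `φₙ ⇀ φ` weakly in `L²(0,T;H)` with bounded
norms, then `Γφₙ → Γφ` uniformly on `[0,T]` in `E`. -/
theorem stmt9 {H E : Type*}
    [NormedAddCommGroup H] [InnerProductSpace ℝ H] [CompleteSpace H]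
    [NormedAddCommGroup E] [NormedSpace ℝ E] [CompleteSpace E]
    (T : ℝ) (hT : 0 < T)
    (G : H →L[ℝ] E) (hG : IsCompactOperator G)
    (f : ℕ → ℝ → H) (φ : ℝ → H)
    (hf : ∀ n, MemLp (f n) 2 (volume.restrict (Set.Ioc 0 T)))
    (hφ : MemLp φ 2 (volume.restrict (Set.Ioc 0 T)))
    (M : ℝ)
    (hbound : ∀ n, (∫ t in Set.Ioc 0 T, ‖f n t‖ ^ 2) ≤ M)
    (hweak : ∀ ψ : ℝ → H, MemLp ψ 2 (volume.restrict (Set.Ioc 0 T)) →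
      Filter.Tendsto (fun n => ∫ t in Set.Ioc 0 T, (inner ℝ (f n t) (ψ t) : ℝ))
        Filter.atTop (nhds (∫ t in Set.Ioc 0 T, (inner ℝ (φ t) (ψ t) : ℝ)))) :
    TendstoUniformlyOn
      (fun n t => ∫ s in Set.Ioc (0 : ℝ) t, G (f n s))
      (fun t => ∫ s in Set.Ioc (0 : ℝ) t, G (φ s))
      Filter.atTop (Set.Icc 0 T) :=
  stmt9_general T G hG f φ hf hφ M hbound hweak
end
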